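/- Let 𝒞 be a set of ◇-free modal formulas and G = CK_□+𝒞, where CK_□ is LJ extended by the rule K_□. (i) If G extended by the rule K_◇ proves a sequent S over the full modal language, then G proves f_i(S), where f_i fixes atoms, ⊤ and ⊥, commutes with ∧, ∨, →, □, and sends every formula ◇A to ⊥. (ii) If moreover G proves (⇒ □p → p), and G extended by the rule K_◇ and the axiom p → ◇p proves a sequent S, then G proves f_r(S), where f_r fixes atoms, ⊤ and ⊥, commutes with ∧, ∨, →, □, and sends ◇A to f_r(A). -/

import Mathlib

set_option autoImplicit false

namespace UPT

/-- Modal formulas over atoms of type `α` (the language `ℒ = {∧,∨,→,⊤,⊥,□,◇}`). -/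
inductive Fml (α : Type) : Type where
  | atom : α → Fml α
  | top  : Fml α
  | bot  : Fml α
  | and  : Fml α → Fml α → Fml α
  | or   : Fml α → Fml α → Fml α
  | imp  : Fml α → Fml α → Fml α
  | box  : Fml α → Fml α
  | dia  : Fml α → Fml α
deriving DecidableEq

variable {α β : Type}

/-- Simultaneous substitution of formulas for atoms. -/
def Fml.subst (σ : β → Fml α) : Fml β → Fml α
  | .atom b  => σ b
  | .top     => .top
  | .bot     => .bot
  | .and A B => .and (A.subst σ) (B.subst σ)
  | .or A B  => .or (A.subst σ) (B.subst σ)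
  | .imp A B => .imp (A.subst σ) (B.subst σ)
  | .box A   => .box (A.subst σ)
  | .dia A   => .dia (A.subst σ)

/-- A sequent: a finite multiset antecedent together with a succedent
containing at most one formula. -/
abbrev Seq (α : Type) : Type := Multiset (Fml α) × Option (Fml α)

/-- A rule set relates a (finite) list of premise sequents to a conclusion sequent. -/
abbrev RuleSet (α : Type) : Type := List (Seq α) → Seq α → Prop

/-- The axioms and rules of the single-conclusion sequent calculus `LJ`, stated
schematically: they are closed under substituting arbitrary formulas for atoms
and arbitrary multisets (resp. succedents) for the context variables. -/
inductive LJRule : List (Seq α) → Seq α → Prop where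
  | id (Γ : Multiset (Fml α)) (A : Fml α) : LJRule [] (A ::ₘ Γ, some A)
  | botL (Γ : Multiset (Fml α)) (Δ : Option (Fml α)) : LJRule [] (.bot ::ₘ Γ, Δ)
  | topR (Γ : Multiset (Fml α)) : LJRule [] (Γ, some .top)
  | wL (A : Fml α) (Γ : Multiset (Fml α)) (Δ : Option (Fml α)) :
      LJRule [(Γ, Δ)] (A ::ₘ Γ, Δ)
  | wR (A : Fml α) (Γ : Multiset (Fml α)) : LJRule [(Γ, none)] (Γ, some A)
  | cL (A : Fml α) (Γ : Multiset (Fml α)) (Δ : Option (Fml α)) :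
      LJRule [(A ::ₘ A ::ₘ Γ, Δ)] (A ::ₘ Γ, Δ)
  | cut (A : Fml α) (Γ : Multiset (Fml α)) (Δ : Option (Fml α)) :
      LJRule [(Γ, some A), (A ::ₘ Γ, Δ)] (Γ, Δ)
  | andL₁ (A B : Fml α) (Γ : Multiset (Fml α)) (Δ : Option (Fml α)) :
      LJRule [(A ::ₘ Γ, Δ)] (.and A B ::ₘ Γ, Δ)
  | andL₂ (A B : Fml α) (Γ : Multiset (Fml α)) (Δ : Option (Fml α)) :
      LJRule [(B ::ₘ Γ, Δ)] (.and A B ::ₘ Γ, Δ)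
  | andR (A B : Fml α) (Γ : Multiset (Fml α)) :
      LJRule [(Γ, some A), (Γ, some B)] (Γ, some (.and A B))
  | orL (A B : Fml α) (Γ : Multiset (Fml α)) (Δ : Option (Fml α)) :
      LJRule [(A ::ₘ Γ, Δ), (B ::ₘ Γ, Δ)] (.or A B ::ₘ Γ, Δ)
  | orR₁ (A B : Fml α) (Γ : Multiset (Fml α)) : LJRule [(Γ, some A)] (Γ, some (.or A B))
  | orR₂ (A B : Fml α) (Γ : Multiset (Fml α)) : LJRule [(Γ, some B)] (Γ, some (.or A B))
  | impL (A B : Fml α) (Γ : Multiset (Fml α)) (Δ : Option (Fml α)) :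
      LJRule [(Γ, some A), (B ::ₘ Γ, Δ)] (.imp A B ::ₘ Γ, Δ)
  | impR (A B : Fml α) (Γ : Multiset (Fml α)) :
      LJRule [(A ::ₘ Γ, some B)] (Γ, some (.imp A B))

/-- The rule `K_□`: from `Γ ⇒ A` infer `□Γ ⇒ □A`. -/
inductive KBoxRule : List (Seq α) → Seq α → Prop where
  | mk (Γ : Multiset (Fml α)) (A : Fml α) :
      KBoxRule [(Γ, some A)] (Γ.map Fml.box, some (.box A))

/-- The rule `K_◇`: from `Γ, A ⇒ B` infer `□Γ, ◇A ⇒ ◇B`. -/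
inductive KDiaRule : List (Seq α) → Seq α → Prop where
  | mk (Γ : Multiset (Fml α)) (A B : Fml α) :
      KDiaRule [(A ::ₘ Γ, some B)] (.dia A ::ₘ Γ.map Fml.box, some (.dia B))

/-- The rule `◇L`: from `Γ, A ⇒ B` infer `Γ, ◇A ⇒ ◇B`. -/
inductive DiaLRule : List (Seq α) → Seq α → Prop where
  | mk (Γ : Multiset (Fml α)) (A B : Fml α) :
      DiaLRule [(A ::ₘ Γ, some B)] (.dia A ::ₘ Γ, some (.dia B))

/-- Adding a set `Ax` of axioms to a calculus: the initial sequents `⇒ σ(A)`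
for every substitution instance `σ(A)` of every `A ∈ Ax`. -/
def axRule (Ax : Fml α → Prop) : RuleSet α := fun ps c =>
  ps = [] ∧ ∃ (A : Fml α) (σ : α → Fml α), Ax A ∧ c = ((0 : Multiset (Fml α)), some (A.subst σ))

/-- Using a set of sequents as additional initial sequents (assumptions). -/
def hypRule (H : Set (Seq α)) : RuleSet α := fun ps c => ps = [] ∧ c ∈ H

/-- The sequent calculus `LJ+Ax`. -/
def LJSys (Ax : Fml α → Prop) : RuleSet α := fun ps c => LJRule ps c ∨ axRule Ax ps c

/-- The sequent calculus `CK+Ax = LJ + K_□ + K_◇ + Ax`. -/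
def CKSys (Ax : Fml α → Prop) : RuleSet α := fun ps c =>
  LJRule ps c ∨ KBoxRule ps c ∨ KDiaRule ps c ∨ axRule Ax ps c

/-- The sequent calculus `CK_□+Ax = LJ + K_□ + Ax`. -/
def CKBoxSys (Ax : Fml α → Prop) : RuleSet α := fun ps c =>
  LJRule ps c ∨ KBoxRule ps c ∨ axRule Ax ps c

/-- The sequent calculus `BLL+Ax = LJ + ◇L + Ax`. -/
def BLLSys (Ax : Fml α → Prop) : RuleSet α := fun ps c =>
  LJRule ps c ∨ DiaLRule ps c ∨ axRule Ax ps c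

/-- Provability of a sequent in the calculus generated by a rule set. -/
inductive Derives (R : RuleSet α) : Multiset (Fml α) → Option (Fml α) → Prop where
  | step {ps : List (Seq α)} {c : Seq α} (hr : R ps c)
      (hp : ∀ p ∈ ps, Derives R p.1 p.2) : Derives R c.1 c.2

/-- Basic formulas: generated from atoms, `⊤`, `⊥` by `∧`, `∨`, `◇`. -/
inductive Basic : Fml α → Prop where
  | atom (a : α) : Basic (.atom a)
  | top : Basic (.top : Fml α)
  | bot : Basic (.bot : Fml α)
  | and {A B : Fml α} : Basic A → Basic B → Basic (.and A B)
  | or {A B : Fml α} : Basic A → Basic B → Basic (.or A B)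
  | dia {A : Fml α} : Basic A → Basic (.dia A)

/-- Almost positive formulas: generated from basic formulas by `∧`, `∨`, `□`, `◇`
and implications `A → B` with `A` basic and `B` almost positive. -/
inductive AlmostPos : Fml α → Prop where
  | basic {A : Fml α} : Basic A → AlmostPos A
  | and {A B : Fml α} : AlmostPos A → AlmostPos B → AlmostPos (.and A B)
  | or {A B : Fml α} : AlmostPos A → AlmostPos B → AlmostPos (.or A B)
  | box {A : Fml α} : AlmostPos A → AlmostPos (.box A)
  | dia {A : Fml α} : AlmostPos A → AlmostPos (.dia A)
  | imp {A B : Fml α} : Basic A → AlmostPos B → AlmostPos (.imp A B)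

/-- Constructive formulas: generated from basic formulas by `∧`, `□` and
implications `A → B` with `A` almost positive and `B` constructive. -/
inductive Constructive : Fml α → Prop where
  | basic {A : Fml α} : Basic A → Constructive A
  | and {A B : Fml α} : Constructive A → Constructive B → Constructive (.and A B)
  | box {A : Fml α} : Constructive A → Constructive (.box A)
  | imp {A B : Fml α} : AlmostPos A → Constructive B → Constructive (.imp A B)

/-- Harrop formulas: atoms, `⊥`, `⊤`, closed under `∧`, `□`, and implications
`A → B` with `A` arbitrary and `B` Harrop. -/
inductive Harrop : Fml α → Prop where
  | atom (a : α) : Harrop (.atom a)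
  | top : Harrop (.top : Fml α)
  | bot : Harrop (.bot : Fml α)
  | and {A B : Fml α} : Harrop A → Harrop B → Harrop (.and A B)
  | box {A : Fml α} : Harrop A → Harrop (.box A)
  | imp (A : Fml α) {B : Fml α} : Harrop B → Harrop (.imp A B)

/-- Conjunction of a list of formulas (`⋀∅ = ⊤`). -/
def conj : List (Fml α) → Fml α
  | [] => .top
  | [A] => A
  | A :: B :: l => .and A (conj (B :: l))

/-- Disjunction of a list of formulas (`⋁∅ = ⊥`). -/
def disj : List (Fml α) → Fml α
  | [] => .bot
  | [A] => A
  | A :: B :: l => .or A (disj (B :: l))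

/-- Disjunction of a succedent (at most one formula; `⋁∅ = ⊥`). -/
def odisj : Option (Fml α) → Fml α
  | none => .bot
  | some A => A

/-- The multiset `{A_i → B_i}_{i ∈ I}` of implications of an indexed family. -/
def imps (AB : List (Fml α × Fml α)) : Multiset (Fml α) :=
  ↑(AB.map fun p => Fml.imp p.1 p.2)

/-- The conjunction `⋀_{i∈I} (A_i → B_i)` of an indexed family of implications. -/
def impConj (AB : List (Fml α × Fml α)) : Fml α :=
  conj (AB.map fun p => Fml.imp p.1 p.2)

/-- Truth in the one-node *irreflexive* frame `𝒦ᵢ` under a Boolean valuation: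
`□A` is always true and `◇A` is always false; the propositional connectives
are evaluated classically. -/
def evalI (v : α → Bool) : Fml α → Bool
  | .atom a  => v a
  | .top     => true
  | .bot     => false
  | .and A B => evalI v A && evalI v B
  | .or A B  => evalI v A || evalI v B
  | .imp A B => !evalI v A || evalI v B
  | .box _   => true
  | .dia _   => false

/-- Truth in the one-node *reflexive* frame `𝒦ᵣ` under a Boolean valuation:
`□A` and `◇A` take the value of `A`. -/
def evalR (v : α → Bool) : Fml α → Bool
  | .atom a  => v a
  | .top     => true
  | .bot     => false
  | .and A B => evalR v A && evalR v B
  | .or A B  => evalR v A || evalR v B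
  | .imp A B => !evalR v A || evalR v B
  | .box A   => evalR v A
  | .dia A   => evalR v A

/-- Validity of a sequent with respect to a one-node semantics: under every
valuation, if all formulas of the antecedent are true then so is the succedent. -/
def SeqValid (ev : (α → Bool) → Fml α → Bool) (Γ : Multiset (Fml α)) (Δ : Option (Fml α)) :
    Prop :=
  ∀ v : α → Bool, (∀ A ∈ Γ, ev v A = true) → ∃ B ∈ Δ, ev v B = true

/-- `CK+Ax` is T-free: every provable sequent is valid in the irreflexive node frame. -/
def TFree (Ax : Fml α → Prop) : Prop :=
  ∀ (Γ : Multiset (Fml α)) (Δ : Option (Fml α)), Derives (CKSys Ax) Γ Δ → SeqValid evalI Γ Δ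

/-- `CK+Ax` is T-full: every provable sequent is valid in the reflexive node
frame and the calculus proves `⇒ □p → p` and `⇒ p → ◇p`. -/
def TFull (Ax : Fml α → Prop) : Prop :=
  (∀ (Γ : Multiset (Fml α)) (Δ : Option (Fml α)), Derives (CKSys Ax) Γ Δ → SeqValid evalR Γ Δ) ∧
  (∀ a : α, Derives (CKSys Ax) 0 (some (.imp (.box (.atom a)) (.atom a)))) ∧
  (∀ a : α, Derives (CKSys Ax) 0 (some (.imp (.atom a) (.dia (.atom a)))))

/-- Classical validity of a (modality-free) sequent: `⋀Γ → ⋁Δ` is true under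
every Boolean valuation of the atoms. -/
def ClValid (Γ : Multiset (Fml α)) (Δ : Option (Fml α)) : Prop :=
  ∀ v : α → Bool, (∀ A ∈ Γ, evalI v A = true) → ∃ B ∈ Δ, evalI v B = true

/-- Nonempty conjunctions of atoms. -/
inductive AtomConj : Fml α → Prop where
  | single (a : α) : AtomConj (.atom a)
  | and {A B : Fml α} : AtomConj A → AtomConj B → AtomConj (.and A B)

/-- Implicational Horn formulas: `⊥`, atoms, and implications `⋀Q → r` with `Q`
a nonempty multiset of atoms and `r` an atom or `⊥`. -/
inductive ImpHorn : Fml α → Prop where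
  | bot : ImpHorn (.bot : Fml α)
  | atom (a : α) : ImpHorn (.atom a)
  | impAtom {A : Fml α} (hA : AtomConj A) (a : α) : ImpHorn (.imp A (.atom a))
  | impBot {A : Fml α} (hA : AtomConj A) : ImpHorn (.imp A .bot)

/-- Formulas of the form `◇^n p` with `p` an atom and `n ≥ 0`. -/
inductive DiaPowAtom : Fml α → Prop where
  | atom (a : α) : DiaPowAtom (.atom a)
  | dia {A : Fml α} : DiaPowAtom A → DiaPowAtom (.dia A)

/-- Nonempty conjunctions `⋀_{i=1}^k ◇^{n_i} p_i` of formulas `◇^{n_i} p_i`. -/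
inductive DiaConj : Fml α → Prop where
  | single {A : Fml α} : DiaPowAtom A → DiaConj A
  | and {A B : Fml α} : DiaConj A → DiaConj B → DiaConj (.and A B)

/-- Modal Horn formulas: `⊥` and atoms, closed under `□` and under implications
`A → B` with `A = ⋀_{i=1}^k ◇^{n_i} p_i` and `B` modal Horn. -/
inductive ModalHorn : Fml α → Prop where
  | bot : ModalHorn (.bot : Fml α)
  | atom (a : α) : ModalHorn (.atom a)
  | box {A : Fml α} : ModalHorn A → ModalHorn (.box A)
  | imp {A B : Fml α} : DiaConj A → ModalHorn B → ModalHorn (.imp A B)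

/-- The predicate "all atoms of the formula satisfy `P`". -/
def Fml.AtomsIn (P : α → Prop) : Fml α → Prop
  | .atom a  => P a
  | .top     => True
  | .bot     => True
  | .and A B => A.AtomsIn P ∧ B.AtomsIn P
  | .or A B  => A.AtomsIn P ∧ B.AtomsIn P
  | .imp A B => A.AtomsIn P ∧ B.AtomsIn P
  | .box A   => A.AtomsIn P
  | .dia A   => A.AtomsIn P

/-- No `◇` occurs in the formula. -/
def Fml.DiaFree : Fml α → Prop
  | .atom _  => True
  | .top     => True
  | .bot     => True
  | .and A B => A.DiaFree ∧ B.DiaFree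
  | .or A B  => A.DiaFree ∧ B.DiaFree
  | .imp A B => A.DiaFree ∧ B.DiaFree
  | .box A   => A.DiaFree
  | .dia _   => False

/-- No `□` occurs in the formula. -/
def Fml.BoxFree : Fml α → Prop
  | .atom _  => True
  | .top     => True
  | .bot     => True
  | .and A B => A.BoxFree ∧ B.BoxFree
  | .or A B  => A.BoxFree ∧ B.BoxFree
  | .imp A B => A.BoxFree ∧ B.BoxFree
  | .box _   => False
  | .dia A   => A.BoxFree

/-- The formula is modality-free (propositional). -/
def Fml.ModFree : Fml α → Prop
  | .atom _  => True
  | .top     => True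
  | .bot     => True
  | .and A B => A.ModFree ∧ B.ModFree
  | .or A B  => A.ModFree ∧ B.ModFree
  | .imp A B => A.ModFree ∧ B.ModFree
  | .box _   => False
  | .dia _   => False

/-- An angling of the language: an injection `φ ↦ ⟨φ⟩` from formulas into the
atoms whose image (the angled atoms) is disjoint from a fixed infinite set of
plain atoms. -/
structure Angling (α : Type) where
  angle : Fml α → α
  plain : Set α
  inj : Function.Injective angle
  plain_infinite : plain.Infinite
  disjoint : ∀ φ : Fml α, angle φ ∉ plain

/-- `a` is an angled atom. -/
def Angling.Angled (S : Angling α) (a : α) : Prop := ∃ φ : Fml α, S.angle φ = a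

/-- The translation `t`: `⊥^t = ⊥`, `p^t = ⟨p⟩`, `⊤^t = ⟨⊤⟩`,
`(A ∘ B)^t = (A^t ∘ B^t) ∧ ⟨A ∘ B⟩` and `(○A)^t = (○A^t) ∧ ⟨○A⟩`. -/
def Angling.tr (S : Angling α) : Fml α → Fml α
  | .atom a  => .atom (S.angle (.atom a))
  | .top     => .atom (S.angle .top)
  | .bot     => .bot
  | .and A B => .and (.and (S.tr A) (S.tr B)) (.atom (S.angle (.and A B)))
  | .or A B  => .and (.or (S.tr A) (S.tr B)) (.atom (S.angle (.or A B)))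
  | .imp A B => .and (.imp (S.tr A) (S.tr B)) (.atom (S.angle (.imp A B)))
  | .box A   => .and (.box (S.tr A)) (.atom (S.angle (.box A)))
  | .dia A   => .and (.dia (S.tr A)) (.atom (S.angle (.dia A)))

/-- Action of the standard substitution on atoms: an angled atom `⟨φ⟩` is sent
to `φ`; plain atoms are fixed. -/
noncomputable def Angling.stdAtom (S : Angling α) (a : α) : Fml α :=
  haveI := Classical.propDecidable (∃ φ : Fml α, S.angle φ = a)
  if h : ∃ φ : Fml α, S.angle φ = a then h.choose else .atom a

/-- The standard substitution `s`: replaces each angled atom `⟨φ⟩` by `φ`,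
fixes the plain atoms, and commutes with all connectives. -/
noncomputable def Angling.std (S : Angling α) : Fml α → Fml α :=
  Fml.subst S.stdAtom

/-- The Visser–Harrop property of a calculus. -/
def VisserHarrop (R : RuleSet α) : Prop :=
  ∀ (Γ : Multiset (Fml α)), (∀ A ∈ Γ, Harrop A) →
  ∀ (AB : List (Fml α × Fml α)) (C D : Fml α),
    Derives R (Γ + imps AB) (some (.or C D)) →
    Derives R (Γ + imps AB) (some C) ∨
    Derives R (Γ + imps AB) (some D) ∨
    ∃ p ∈ AB, Derives R (Γ + imps AB) (some p.1)

/-- The disjunction property of a calculus. -/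
def DisjProp (R : RuleSet α) : Prop :=
  ∀ C D : Fml α, Derives R 0 (some (.or C D)) →
    Derives R 0 (some C) ∨ Derives R 0 (some D)

/-- The formula interpretation `I(Γ ⇒ Δ) = ⋀Γ → ⋁Δ` belongs to `L` (stated for
every enumeration of the antecedent multiset as a list). -/
def interpIn (L : Set (Fml α)) (s : Seq α) : Prop :=
  ∀ l : List (Fml α), (↑l : Multiset (Fml α)) = s.1 → Fml.imp (conj l) (odisj s.2) ∈ L

/- Named modal axioms (with `p := atom 0`, `q := atom 1`). -/
def axTa : Fml ℕ := .imp (.box (.atom 0)) (.atom 0)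
def axTb : Fml ℕ := .imp (.atom 0) (.dia (.atom 0))
def axBa : Fml ℕ := .imp (.dia (.box (.atom 0))) (.atom 0)
def axBb : Fml ℕ := .imp (.atom 0) (.box (.dia (.atom 0)))
def ax4a : Fml ℕ := .imp (.box (.atom 0)) (.box (.box (.atom 0)))
def ax4b : Fml ℕ := .imp (.dia (.dia (.atom 0))) (.dia (.atom 0))
def ax5a : Fml ℕ := .imp (.dia (.box (.atom 0))) (.box (.atom 0))
def ax5b : Fml ℕ := .imp (.dia (.atom 0)) (.box (.dia (.atom 0)))
def axDiaBot : Fml ℕ := .imp (.dia .bot) .bot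
def axDiaOr : Fml ℕ :=
  .imp (.dia (.or (.atom 0) (.atom 1))) (.or (.dia (.atom 0)) (.dia (.atom 1)))
def axBoxImp : Fml ℕ :=
  .imp (.imp (.dia (.atom 0)) (.box (.atom 1))) (.box (.imp (.atom 0) (.atom 1)))

/-- The axioms of `X ⊆ {T, B, 4, 5}` in both their `a`- and `b`-versions. -/
def XAxioms (tT tB t4 t5 : Bool) : Set (Fml ℕ) :=
  (if tT then ({axTa, axTb} : Set (Fml ℕ)) else ∅) ∪
  (if tB then ({axBa, axBb} : Set (Fml ℕ)) else ∅) ∪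
  (if t4 then ({ax4a, ax4b} : Set (Fml ℕ)) else ∅) ∪
  (if t5 then ({ax5a, ax5b} : Set (Fml ℕ)) else ∅)

/-- The additional axioms of `IK` over `CK`. -/
def IKExtra : Set (Fml ℕ) := {axDiaBot, axDiaOr, axBoxImp}

/-- The right rule with premises `{Γ, φ̄_i ⇒ ψ̄_i}_{i∈I}` and conclusion
`Γ, θ̄ ⇒ η̄`, closed under all substitutions of formulas for atoms and
multisets for the context `Γ`. -/
def rightRuleInst (prems : List (List (Fml α) × Option (Fml α)))
    (θ : List (Fml α)) (η : Option (Fml α)) : RuleSet α := fun ps c =>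
  ∃ (σ : α → Fml α) (Γ : Multiset (Fml α)),
    ps = prems.map (fun pr =>
        ((Γ + ↑(pr.1.map (Fml.subst σ)) : Multiset (Fml α)), pr.2.map (Fml.subst σ))) ∧
    c = ((Γ + ↑(θ.map (Fml.subst σ)) : Multiset (Fml α)), η.map (Fml.subst σ))

/-- The left rule with premises `{Γ, φ̄_i ⇒ ψ̄_i}_{i∈I} ∪ {Γ, θ̄_j ⇒ Δ}_{j∈J}`
and conclusion `Γ, η̄ ⇒ Δ`, closed under all substitutions of formulas for
atoms and multisets for `Γ` and `Δ`. -/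
def leftRuleInst (prems : List (List (Fml α) × Option (Fml α)))
    (lefts : List (List (Fml α))) (η : List (Fml α)) : RuleSet α := fun ps c =>
  ∃ (σ : α → Fml α) (Γ : Multiset (Fml α)) (Δ : Option (Fml α)),
    ps = prems.map (fun pr =>
          ((Γ + ↑(pr.1.map (Fml.subst σ)) : Multiset (Fml α)), pr.2.map (Fml.subst σ)))
        ++ lefts.map (fun θj => ((Γ + ↑(θj.map (Fml.subst σ)) : Multiset (Fml α)), Δ)) ∧
    c = ((Γ + ↑(η.map (Fml.subst σ)) : Multiset (Fml α)), Δ)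

/-- The formula `Ax_R` of a right rule. -/
def AxRight (prems : List (List (Fml α) × Option (Fml α)))
    (θ : List (Fml α)) (η : Option (Fml α)) : Fml α :=
  .imp (.and (conj (prems.map fun pr => .imp (conj pr.1) (odisj pr.2))) (conj θ)) (odisj η)

/-- The formula `Ax_R` of a left rule. -/
def AxLeft (prems : List (List (Fml α) × Option (Fml α)))
    (lefts : List (List (Fml α))) (η : List (Fml α)) : Fml α :=
  .imp (.and (conj (prems.map fun pr => .imp (conj pr.1) (odisj pr.2))) (conj η))
    (disj (lefts.map conj))

/-- The forgetful translation `f_i`: fixes atoms, `⊤`, `⊥`, commutes with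
`∧`, `∨`, `→`, `□`, and sends every `◇A` to `⊥`. -/
def fi : Fml α → Fml α
  | .atom a  => .atom a
  | .top     => .top
  | .bot     => .bot
  | .and A B => .and (fi A) (fi B)
  | .or A B  => .or (fi A) (fi B)
  | .imp A B => .imp (fi A) (fi B)
  | .box A   => .box (fi A)
  | .dia _   => .bot

/-- The forgetful translation `f_r`: fixes atoms, `⊤`, `⊥`, commutes with
`∧`, `∨`, `→`, `□`, and sends `◇A` to `f_r A`. -/
def fr : Fml α → Fml α
  | .atom a  => .atom a
  | .top     => .top
  | .bot     => .bot
  | .and A B => .and (fr A) (fr B)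
  | .or A B  => .or (fr A) (fr B)
  | .imp A B => .imp (fr A) (fr B)
  | .box A   => .box (fr A)
  | .dia A   => fr A

/-! Both translations commute with every connective except `◇`, so they map `LJ`, `K_□` and the
◇-free axioms of `G` to themselves. Under `f_i` the conclusion of `K_◇` has `⊥` on the left;
under `f_r` it becomes `□Γ, A ⇒ B`, which follows from the premise `Γ, A ⇒ B` by cutting each
`□C` against `□C → C`, an instance of `□p → p`. The axiom `p → ◇p` becomes `A → A`. -/

variable {γ : Type}

structure IsBoxHom (f : Fml α → Fml β) : Prop where
  top : f .top = .top
  bot : f .bot = .bot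
  and : ∀ A B, f (.and A B) = .and (f A) (f B)
  or : ∀ A B, f (.or A B) = .or (f A) (f B)
  imp : ∀ A B, f (.imp A B) = .imp (f A) (f B)
  box : ∀ A, f (.box A) = .box (f A)

theorem isBoxHom_subst (τ : α → Fml β) : IsBoxHom (Fml.subst τ) :=
  ⟨rfl, rfl, fun _ _ => rfl, fun _ _ => rfl, fun _ _ => rfl, fun _ => rfl⟩

theorem isBoxHom_fi : IsBoxHom (fi : Fml α → Fml α) :=
  ⟨rfl, rfl, fun _ _ => rfl, fun _ _ => rfl, fun _ _ => rfl, fun _ => rfl⟩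

theorem isBoxHom_fr : IsBoxHom (fr : Fml α → Fml α) :=
  ⟨rfl, rfl, fun _ _ => rfl, fun _ _ => rfl, fun _ _ => rfl, fun _ => rfl⟩

namespace IsBoxHom

variable {f : Fml α → Fml β}

theorem map_subst_of_diaFree (hf : IsBoxHom f) (σ : γ → Fml α) {A : Fml γ} (hA : A.DiaFree) :
    f (A.subst σ) = A.subst (f ∘ σ) := by
  induction A with
  | atom => rfl
  | top => exact hf.top
  | bot => exact hf.bot
  | and A B ihA ihB => simp_all only [Fml.DiaFree, Fml.subst, hf.and]
  | or A B ihA ihB => simp_all only [Fml.DiaFree, Fml.subst, hf.or]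
  | imp A B ihA ihB => simp_all only [Fml.DiaFree, Fml.subst, hf.imp]
  | box A ih => simp_all only [Fml.DiaFree, Fml.subst, hf.box]
  | dia => exact hA.elim

theorem ljRule_map (hf : IsBoxHom f) {ps : List (Seq α)} {c : Seq α} (h : LJRule ps c) :
    LJRule (ps.map fun s => (s.1.map f, s.2.map f)) (c.1.map f, c.2.map f) := by
  cases h <;> simp only [List.map_cons, List.map_nil, Multiset.map_cons, Option.map_some,
    Option.map_none, hf.top, hf.bot, hf.and, hf.or, hf.imp] <;> constructor

theorem kBoxRule_map (hf : IsBoxHom f) {ps : List (Seq α)} {c : Seq α} (h : KBoxRule ps c) :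
    KBoxRule (ps.map fun s => (s.1.map f, s.2.map f)) (c.1.map f, c.2.map f) := by
  obtain ⟨Γ, A⟩ := h
  simpa only [List.map_cons, List.map_nil, Multiset.map_map, Function.comp_def, Option.map_some,
    hf.box] using KBoxRule.mk (Γ.map f) (f A)

theorem axRule_map_of_diaFree {Ax : Fml α → Prop} {f : Fml α → Fml α} (hf : IsBoxHom f)
    (hAx : ∀ A, Ax A → A.DiaFree) {ps : List (Seq α)} {c : Seq α} (h : axRule Ax ps c) :
    axRule Ax (ps.map fun s => (s.1.map f, s.2.map f)) (c.1.map f, c.2.map f) := by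
  obtain ⟨rfl, A, σ, hA, rfl⟩ := h
  exact ⟨rfl, A, f ∘ σ, hA, by simp [hf.map_subst_of_diaFree σ (hAx A hA)]⟩

end IsBoxHom

theorem Derives.map {R : RuleSet α} {R' : RuleSet β} (f : Fml α → Fml β)
    (hf : ∀ {ps c}, R ps c → (∀ p ∈ ps, Derives R' (p.1.map f) (p.2.map f)) →
      Derives R' (c.1.map f) (c.2.map f))
    {Γ : Multiset (Fml α)} {Δ : Option (Fml α)} (h : Derives R Γ Δ) :
    Derives R' (Γ.map f) (Δ.map f) := by
  induction h with
  | step hr _ ih => exact hf hr ih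

theorem Derives.step_map {R : RuleSet β} (f : Fml α → Fml β) {ps : List (Seq α)}
    {c : Seq β} (hr : R (ps.map fun s => (s.1.map f, s.2.map f)) c)
    (hp : ∀ p ∈ ps, Derives R (p.1.map f) (p.2.map f)) : Derives R c.1 c.2 :=
  Derives.step hr (by simpa only [List.forall_mem_map] using hp)

theorem IsBoxHom.derives_map_of_ckBoxSys {Ax : Fml α → Prop} {f : Fml α → Fml α}
    (hf : IsBoxHom f) (hAx : ∀ A, Ax A → A.DiaFree) {ps : List (Seq α)} {c : Seq α}
    (hr : CKBoxSys Ax ps c) (hp : ∀ p ∈ ps, Derives (CKBoxSys Ax) (p.1.map f) (p.2.map f)) :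
    Derives (CKBoxSys Ax) (c.1.map f) (c.2.map f) := by
  rcases hr with h | h | h
  · exact Derives.step_map f (Or.inl (hf.ljRule_map h)) hp
  · exact Derives.step_map f (Or.inr (Or.inl (hf.kBoxRule_map h))) hp
  · exact Derives.step_map f (Or.inr (Or.inr (hf.axRule_map_of_diaFree hAx h))) hp

section LJ

variable {R : RuleSet α}

theorem Derives.ax (hLJ : ∀ {ps c}, LJRule ps c → R ps c) (Γ : Multiset (Fml α)) (A : Fml α) : Derives R (A ::ₘ Γ) (some A) :=
  Derives.step (hLJ (LJRule.id Γ A)) (by simp)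

theorem Derives.weaken (hLJ : ∀ {ps c}, LJRule ps c → R ps c) (Θ : Multiset (Fml α)) {Γ : Multiset (Fml α)} {Δ : Option (Fml α)}
    (h : Derives R Γ Δ) : Derives R (Θ + Γ) Δ := by
  induction Θ using Multiset.induction_on with
  | empty => simpa using h
  | cons A Θ ih =>
    simpa only [Multiset.cons_add] using
      Derives.step (c := (A ::ₘ (Θ + Γ), Δ)) (hLJ (LJRule.wL A (Θ + Γ) Δ)) (by simpa using ih)

theorem Derives.cut (hLJ : ∀ {ps c}, LJRule ps c → R ps c) {Γ : Multiset (Fml α)} {Δ : Option (Fml α)} {A : Fml α}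
    (h₁ : Derives R Γ (some A)) (h₂ : Derives R (A ::ₘ Γ) Δ) : Derives R Γ Δ :=
  Derives.step (hLJ (LJRule.cut A Γ Δ)) (by simp [h₁, h₂])

theorem Derives.impL (hLJ : ∀ {ps c}, LJRule ps c → R ps c) {Γ : Multiset (Fml α)} {Δ : Option (Fml α)} {A B : Fml α}
    (h₁ : Derives R Γ (some A)) (h₂ : Derives R (B ::ₘ Γ) Δ) :
    Derives R (.imp A B ::ₘ Γ) Δ :=
  Derives.step (hLJ (LJRule.impL A B Γ Δ)) (by simp [h₁, h₂])

theorem Derives.impR (hLJ : ∀ {ps c}, LJRule ps c → R ps c) {Γ : Multiset (Fml α)} {A B : Fml α} (h : Derives R (A ::ₘ Γ) (some B)) :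
    Derives R Γ (some (.imp A B)) :=
  Derives.step (hLJ (LJRule.impR A B Γ)) (by simp [h])

theorem Derives.box_left (hLJ : ∀ {ps c}, LJRule ps c → R ps c) (hT : ∀ C : Fml α, Derives R 0 (some (.imp (.box C) C)))
    {Γ : Multiset (Fml α)} {Δ : Option (Fml α)} {C : Fml α} (h : Derives R (C ::ₘ Γ) Δ) :
    Derives R (.box C ::ₘ Γ) Δ := by
  have hTC : Derives R (.box C ::ₘ Γ) (some (.imp (.box C) C)) := by
    simpa using Derives.weaken hLJ (.box C ::ₘ Γ) (hT C)
  have hC : Derives R (C ::ₘ .box C ::ₘ Γ) Δ := by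
    simpa only [Multiset.cons_swap, Multiset.singleton_add] using
      Derives.weaken hLJ {.box C} h
  exact Derives.cut hLJ hTC (Derives.impL hLJ (Derives.ax hLJ Γ (.box C)) hC)

theorem Derives.box_left_multiset (hLJ : ∀ {ps c}, LJRule ps c → R ps c) (hT : ∀ C : Fml α, Derives R 0 (some (.imp (.box C) C)))
    (Θ : Multiset (Fml α)) {Γ : Multiset (Fml α)} {Δ : Option (Fml α)}
    (h : Derives R (Θ + Γ) Δ) : Derives R (Θ.map Fml.box + Γ) Δ := by
  induction Θ using Multiset.induction_on generalizing Γ with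
  | empty => simpa using h
  | cons C Θ ih =>
    have h' := ih (Γ := C ::ₘ Γ) (by simpa only [Multiset.add_cons, Multiset.cons_add] using h)
    simpa only [Multiset.map_cons, Multiset.cons_add, Multiset.add_cons] using
      Derives.box_left hLJ hT (by simpa only [Multiset.add_cons] using h')

end LJ

theorem derives_boxImpSelf {Ax : Fml α → Prop} (hAx : ∀ A, Ax A → A.DiaFree) {a : α}
    (hT : Derives (CKBoxSys Ax) 0 (some (.imp (.box (.atom a)) (.atom a)))) (C : Fml α) :
    Derives (CKBoxSys Ax) 0 (some (.imp (.box C) C)) :=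
  Derives.map (Fml.subst fun _ => C)
    (fun hr hp => (isBoxHom_subst _).derives_map_of_ckBoxSys hAx hr hp) hT

/-- forgetful conservativity of `G = CK_□+𝒞` (𝒞 ◇-free):
(i) proofs in `G + K_◇` translate along `f_i`; (ii) if `G` proves `⇒ □p → p`,
proofs in `G + K_◇ + (p → ◇p)` translate along `f_r`. -/
theorem statement_16 (CS : Set (Fml ℕ)) (hCS : ∀ A ∈ CS, A.DiaFree) :
    (∀ (Γ : Multiset (Fml ℕ)) (Δ : Option (Fml ℕ)),
      Derives (CKSys (· ∈ CS)) Γ Δ →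
      Derives (CKBoxSys (· ∈ CS)) (Γ.map fi) (Δ.map fi)) ∧
    ((∀ n : ℕ, Derives (CKBoxSys (· ∈ CS)) 0
        (some (.imp (.box (.atom n)) (.atom n)))) →
      ∀ (Γ : Multiset (Fml ℕ)) (Δ : Option (Fml ℕ)),
        Derives (CKSys (fun A => A ∈ CS ∨ A = axTb)) Γ Δ →
        Derives (CKBoxSys (· ∈ CS)) (Γ.map fr) (Δ.map fr)) := by
  have hLJ : ∀ {ps c}, LJRule ps c → CKBoxSys (· ∈ CS) ps c := Or.inl
  refine ⟨fun Γ Δ => Derives.map fi fun hr hp => ?_, fun hT Γ Δ => Derives.map fr fun hr hp => ?_⟩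
  · rcases hr with h | h | ⟨Γ', A, B⟩ | h
    · exact isBoxHom_fi.derives_map_of_ckBoxSys hCS (Or.inl h) hp
    · exact isBoxHom_fi.derives_map_of_ckBoxSys hCS (Or.inr (Or.inl h)) hp
    · simpa [fi] using Derives.step (c := (.bot ::ₘ _, _)) (hLJ (LJRule.botL _ (some .bot))) (by simp)
    · exact isBoxHom_fi.derives_map_of_ckBoxSys hCS (Or.inr (Or.inr h)) hp
  · rcases hr with h | h | ⟨Γ', A, B⟩ | ⟨rfl, A, σ, hA | rfl, rfl⟩
    · exact isBoxHom_fr.derives_map_of_ckBoxSys hCS (Or.inl h) hp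
    · exact isBoxHom_fr.derives_map_of_ckBoxSys hCS (Or.inr (Or.inl h)) hp
    · have hprem : Derives (CKBoxSys (· ∈ CS)) (Γ'.map fr + {fr A}) (some (fr B)) := by
        rw [add_comm, Multiset.singleton_add]
        simpa using hp _ (List.mem_singleton_self _)
      simpa [Multiset.map_map, Function.comp_def, fr, add_comm] using
        Derives.box_left_multiset hLJ (derives_boxImpSelf hCS (hT 0)) _ hprem
    · exact isBoxHom_fr.derives_map_of_ckBoxSys hCS (Or.inr (Or.inr ⟨rfl, A, σ, hA, rfl⟩)) (by simp)
    · exact Derives.impR hLJ (by simpa [axTb, fr, Fml.subst] using Derives.ax hLJ 0 (fr (σ 0)))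

end UPT
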